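/- The following two statements are equivalent: (1) for all finite simple graphs G and H and all vertices x ∈ V(G), y ∈ V(H), π(G × H, (x, y)) ≤ π(G, x) · π(H, y); (2) for all finite simple graphs G and H, all nonnegative integers a and b, and all vertices x ∈ V(G), y ∈ V(H), π_{2^{a+b}}(G × H, (x, y)) ≤ π_{2^a}(G, x) · π_{2^b}(H, y). -/

import Mathlib

open scoped BigOperators

/-- A single pebbling move on a simple graph: remove two pebbles from `u`
and add one pebble on an adjacent vertex `v`. -/
def PebMove {V : Type*} [DecidableEq V] (G : SimpleGraph V) (D D' : V → ℕ) : Prop :=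
  ∃ u v, G.Adj u v ∧ 2 ≤ D u ∧
    D' = fun w => if w = u then D u - 2 else if w = v then D v + 1 else D w

/-- `D'` is reachable from `D`: some sequence of pebbling moves starting at `D`
produces a distribution containing `D'`. -/
def Reaches {V : Type*} [DecidableEq V] (G : SimpleGraph V) (D D' : V → ℕ) : Prop :=
  ∃ D'', Relation.ReflTransGen (PebMove G) D D'' ∧ ∀ v, D' v ≤ D'' v

/-- Total number of pebbles of a distribution. -/
def pebTotal {V : Type*} [Fintype V] (D : V → ℕ) : ℕ := ∑ v, D v

/-- The pebbling number of a set `S` of target distributions on `G`: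
the least `N` (possibly `∞`) such that every member of `S` is reachable from
every distribution with at least `N` pebbles in total. -/
noncomputable def pebSet {V : Type*} [Fintype V] [DecidableEq V] (G : SimpleGraph V)
    (S : Set (V → ℕ)) : ℕ∞ :=
  sInf {N : ℕ∞ | ∀ D₀ : V → ℕ, N ≤ (pebTotal D₀ : ℕ∞) → ∀ D ∈ S, Reaches G D₀ D}

/-- The pebbling number of a single target distribution. -/
noncomputable def peb {V : Type*} [Fintype V] [DecidableEq V] (G : SimpleGraph V)
    (D : V → ℕ) : ℕ∞ :=
  pebSet G {D}

/-- The distribution with `t` pebbles on `v` and none elsewhere. -/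
def unitDist {V : Type*} [DecidableEq V] (t : ℕ) (v : V) : V → ℕ :=
  fun w => if w = v then t else 0

/-!
Let `G⁺` be `G` with a new leaf `ℓ` hanging from `x`. Counting every pebble on `ℓ` as two
pebbles on `x` projects each pebbling sequence of `G⁺ □ H` onto one of `G □ H`, whence
`π_{2t}(G □ H, (x, y)) ≤ π_t(G⁺ □ H, (ℓ, y))`. Conversely, replacing the `s` pebbles on `ℓ` by
`2s` pebbles on `x` gives enough pebbles to put `2t` on `x`; removing the added pebbles again
costs at most `2s` of those, and the remaining `2(t - s)` send `t - s` more pebbles to `ℓ`, so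
`π_t(G⁺, ℓ) ≤ π_{2t}(G, x)`. Attaching `a` leaves in turn to `G` and `b` to `H` and applying (1)
to the resulting graphs gives (2); (1) is the case `a = b = 0` of (2).
-/

open SimpleGraph

section Moves

variable {V : Type*} [DecidableEq V] {G : SimpleGraph V}

theorem unitDist_eq_single (t : ℕ) (v : V) : unitDist t v = Pi.single v t := by
  ext w
  simp [unitDist, Pi.single_apply]

theorem pebMove_iff {D D' : V → ℕ} :
    PebMove G D D' ↔ ∃ u v, G.Adj u v ∧ D' + Pi.single u 2 = D + Pi.single v 1 := by
  constructor
  · rintro ⟨u, v, huv, hu, rfl⟩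
    refine ⟨u, v, huv, funext fun w => ?_⟩
    simp only [Pi.add_apply, Pi.single_apply]
    split_ifs <;> subst_vars <;> first | omega | exact absurd rfl huv.ne
  · rintro ⟨u, v, huv, h⟩
    have hpt w := congrFun h w
    simp only [Pi.add_apply, Pi.single_apply] at hpt
    refine ⟨u, v, huv, ?_, funext fun w => ?_⟩
    · have := hpt u
      simp only [if_true, if_neg huv.ne, add_zero] at this
      omega
    · have := hpt w
      split_ifs at this ⊢ <;> subst_vars <;> first | omega | exact absurd rfl huv.ne

theorem pebMove_add_single {u v : V} (huv : G.Adj u v) (D : V → ℕ) :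
    PebMove G (D + Pi.single u 2) (D + Pi.single v 1) :=
  pebMove_iff.2 ⟨u, v, huv, add_right_comm _ _ _⟩

theorem PebMove.add_right {D D' : V → ℕ} (h : PebMove G D D') (B : V → ℕ) :
    PebMove G (D + B) (D' + B) := by
  obtain ⟨u, v, huv, h⟩ := pebMove_iff.1 h
  exact pebMove_iff.2 ⟨u, v, huv, by rw [add_right_comm, h, add_right_comm]⟩

theorem reflTransGen_pebMove_add_right {D E : V → ℕ}
    (h : Relation.ReflTransGen (PebMove G) D E) (B : V → ℕ) :
    Relation.ReflTransGen (PebMove G) (D + B) (E + B) :=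
  h.lift (· + B) fun _ _ hm => hm.add_right B

theorem reflTransGen_pebMove_repeat {u v : V} (huv : G.Adj u v) (D : V → ℕ) (n : ℕ) :
    Relation.ReflTransGen (PebMove G) (D + Pi.single u (2 * n)) (D + Pi.single v n) := by
  induction n generalizing D with
  | zero => simpa using .refl
  | succ n ih =>
    have hmove := pebMove_add_single huv (D + Pi.single u (2 * n))
    rw [add_right_comm _ _ (Pi.single v 1)] at hmove
    convert Relation.ReflTransGen.head hmove (ih (D + Pi.single v 1)) using 1 <;>
      simp only [mul_add, mul_one, Pi.single_add] <;> abel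

theorem reaches_of_le {D T : V → ℕ} (h : T ≤ D) : Reaches G D T :=
  ⟨D, .refl, h⟩

theorem Reaches.mono_right {D T T' : V → ℕ} (h : Reaches G D T) (hT : T' ≤ T) :
    Reaches G D T' :=
  let ⟨E, hE, hTE⟩ := h
  ⟨E, hE, hT.trans hTE⟩

theorem Reaches.trans {D E T : V → ℕ} (hDE : Reaches G D E) (hET : Reaches G E T) :
    Reaches G D T := by
  obtain ⟨E', hDE', hEE'⟩ := hDE
  obtain ⟨T', hET', hTT'⟩ := hET
  have hlift := reflTransGen_pebMove_add_right hET' (E' - E)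
  rw [add_tsub_cancel_of_le hEE'] at hlift
  exact ⟨T' + (E' - E), hDE'.trans hlift, (show T ≤ T' from hTT').trans le_self_add⟩

theorem exists_eq_add_single_of_le {D : V → ℕ} {u : V} {n : ℕ} (h : n ≤ D u) :
    ∃ D₀ : V → ℕ, D = D₀ + Pi.single u n := by
  refine ⟨D - Pi.single u n, funext fun w => ?_⟩
  rcases eq_or_ne w u with rfl | hw
  · simp [Nat.sub_add_cancel h]
  · simp [hw]

theorem exists_reflTransGen_of_reflTransGen_add_single_one {D E : V → ℕ} {v : V}
    (h : Relation.ReflTransGen (PebMove G) (D + Pi.single v 1) E) :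
    ∃ w F, Relation.ReflTransGen (PebMove G) D F ∧ E ≤ F + Pi.single w 1 := by
  induction h with
  | refl => exact ⟨v, D, .refl, le_rfl⟩
  | @tail E E' _ hmove ih =>
    obtain ⟨w, F, hF, hEF⟩ := ih
    obtain ⟨u, u', huu', hmove⟩ := pebMove_iff.1 hmove
    by_cases hFu : 2 ≤ F u
    · obtain ⟨F₀, rfl⟩ := exists_eq_add_single_of_le hFu
      refine ⟨w, F₀ + Pi.single u' 1, hF.tail (pebMove_add_single huu' F₀),
        le_of_add_le_add_right (a := Pi.single u 2) ?_⟩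
      calc E' + Pi.single u 2 = E + Pi.single u' 1 := hmove
        _ ≤ F₀ + Pi.single u 2 + Pi.single w 1 + Pi.single u' 1 := by gcongr
        _ = F₀ + Pi.single u' 1 + Pi.single w 1 + Pi.single u 2 := by abel
    · -- `E` has two pebbles on `u` and `F` fewer, so the deleted pebble sits on `u`
      have hwu : w = u := by
        have h₁ := congrFun hmove u
        have h₂ := hEF u
        simp only [Pi.add_apply, Pi.single_apply, if_true, if_neg huu'.ne] at h₁ h₂
        split_ifs at h₂ with hw
        · exact hw.symm
        · omega
      subst hwu
      refine ⟨u', F, hF, le_of_add_le_add_right (a := Pi.single w 2) ?_⟩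
      calc E' + Pi.single w 2 = E + Pi.single u' 1 := hmove
        _ ≤ F + Pi.single w 1 + Pi.single u' 1 := by gcongr
        _ ≤ F + Pi.single u' 1 + Pi.single w 2 := by
          rw [add_right_comm]
          exact add_le_add_right (Pi.single_mono (f := fun _ => ℕ) w (by norm_num : 1 ≤ 2)) _

theorem exists_reflTransGen_of_reflTransGen_add_single {D E : V → ℕ} {v : V} {n : ℕ}
    (h : Relation.ReflTransGen (PebMove G) (D + Pi.single v n) E) :
    ∃ F, Relation.ReflTransGen (PebMove G) D F ∧ ∀ w, E w ≤ F w + n := by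
  induction n generalizing E with
  | zero => exact ⟨E, by simpa using h, fun _ => le_self_add⟩
  | succ n ih =>
    rw [Pi.single_add, ← add_assoc] at h
    obtain ⟨u, F₁, hF₁, hEF₁⟩ := exists_reflTransGen_of_reflTransGen_add_single_one h
    obtain ⟨F, hF, hF₁F⟩ := ih hF₁
    refine ⟨F, hF, fun w => ?_⟩
    have h₁ := hEF₁ w
    have h₂ := hF₁F w
    have h₃ : (Pi.single u 1 : V → ℕ) w ≤ 1 := by rw [Pi.single_apply]; split_ifs <;> omega
    simp only [Pi.add_apply] at h₁
    omega

end Moves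

section PebblingNumber

variable {V : Type*} [Fintype V] [DecidableEq V] {G : SimpleGraph V} {T : V → ℕ}

theorem reaches_of_peb_le {D : V → ℕ} (h : peb G T ≤ pebTotal D) : Reaches G D T := by
  have hmem : peb G T ∈ {N : ℕ∞ | ∀ D₀ : V → ℕ, N ≤ (pebTotal D₀ : ℕ∞) →
      ∀ T' ∈ ({T} : Set (V → ℕ)), Reaches G D₀ T'} :=
    csInf_mem ⟨⊤, fun D₀ hD₀ => absurd hD₀ (by simp)⟩
  exact hmem D h T rfl

theorem peb_le_iff {N : ℕ∞} : peb G T ≤ N ↔ ∀ D, N ≤ pebTotal D → Reaches G D T :=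
  ⟨fun h _ hD => reaches_of_peb_le (h.trans hD), fun h => sInf_le fun D hD _ hT => hT ▸ h D hD⟩

end PebblingNumber

section WeightedPush

variable {α β : Type*} [Fintype α] [DecidableEq β]

def weightedPush (φ : α → β) (ω : α → ℕ) : (α → ℕ) →+ (β → ℕ) where
  toFun B b := ∑ a with φ a = b, ω a * B a
  map_zero' := by ext; simp
  map_add' B C := by ext; simp [mul_add, Finset.sum_add_distrib]

theorem weightedPush_apply (φ : α → β) (ω B : α → ℕ) (b : β) :
    weightedPush φ ω B b = ∑ a with φ a = b, ω a * B a :=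
  rfl

theorem weightedPush_single [DecidableEq α] (φ : α → β) (ω : α → ℕ) (a : α) (n : ℕ) :
    weightedPush φ ω (Pi.single a n) = Pi.single (φ a) (ω a * n) := by
  ext b
  simp [weightedPush_apply, Pi.single_apply, eq_comm]

theorem weightedPush_mono (φ : α → β) (ω : α → ℕ) : Monotone (weightedPush φ ω) :=
  fun _ _ h _ => Finset.sum_le_sum fun a _ => Nat.mul_le_mul_left _ (h a)

theorem pebTotal_weightedPush_one [Fintype β] (φ : α → β) (D : α → ℕ) :
    pebTotal (weightedPush φ 1 D) = pebTotal D := by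
  simp only [pebTotal, weightedPush_apply, Pi.one_apply, one_mul]
  exact Finset.sum_fiberwise _ _ _

theorem weightedPush_weightedPush_one [DecidableEq α] [Fintype β]
    {ι : α → β} {φ : β → α} {ω : β → ℕ} (hφι : ∀ a, φ (ι a) = a) (hωι : ∀ a, ω (ι a) = 1)
    (D : α → ℕ) : weightedPush φ ω (weightedPush ι 1 D) = D := by
  calc weightedPush φ ω (weightedPush ι 1 D)
      = weightedPush φ ω (weightedPush ι 1 (∑ a, Pi.single a (D a))) := by
        rw [Finset.univ_sum_single]
    _ = ∑ a, Pi.single a (D a) := by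
        simp only [map_sum, weightedPush_single, hφι, hωι, Pi.one_apply, one_mul]
    _ = D := Finset.univ_sum_single D

end WeightedPush

theorem reflTransGen_pebMove_weightedPush_one {V V' : Type*} [Fintype V] [DecidableEq V]
    [DecidableEq V'] {G : SimpleGraph V} {G' : SimpleGraph V'} (f : G →g G') {D E : V → ℕ}
    (h : Relation.ReflTransGen (PebMove G) D E) :
    Relation.ReflTransGen (PebMove G') (weightedPush f 1 D) (weightedPush f 1 E) :=
  h.lift _ fun _ _ hmove => by
    obtain ⟨u, v, huv, hmove⟩ := pebMove_iff.1 hmove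
    refine pebMove_iff.2 ⟨f u, f v, f.map_adj huv, ?_⟩
    simpa [weightedPush_single] using congrArg (weightedPush f 1) hmove

section Contraction

variable {V V' : Type*} {G : SimpleGraph V} {G' : SimpleGraph V'}

/-- Counting a pebble on `p` as `ω p` pebbles on `φ p`, a move of `G'` out of `p` is then
shadowed by at most `ω p` moves of `G`. -/
def IsWeightedContraction (G' : SimpleGraph V') (G : SimpleGraph V) (φ : V' → V)
    (ω : V' → ℕ) : Prop :=
  ∀ ⦃p q⦄, G'.Adj p q → (φ p = φ q ∧ ω q ≤ 2 * ω p) ∨ (G.Adj (φ p) (φ q) ∧ ω q = ω p)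

namespace IsWeightedContraction

variable {φ : V' → V} {ω : V' → ℕ}

theorem boxProd_left (hc : IsWeightedContraction G' G φ ω) {W : Type*} (H : SimpleGraph W) :
    IsWeightedContraction (G' □ H) (G □ H) (Prod.map φ id) (ω ∘ Prod.fst) := by
  rintro ⟨p₁, p₂⟩ ⟨q₁, q₂⟩ hpq
  rcases boxProd_adj.1 hpq with ⟨h₁, rfl : p₂ = q₂⟩ | ⟨h₂, rfl : p₁ = q₁⟩
  · rcases hc h₁ with ⟨hφ, hω⟩ | ⟨hadj, hω⟩
    · exact .inl ⟨by simp [hφ], hω⟩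
    · exact .inr ⟨boxProd_adj.2 (.inl ⟨hadj, rfl⟩), hω⟩
  · exact .inr ⟨boxProd_adj.2 (.inr ⟨h₂, rfl⟩), rfl⟩

theorem boxProd_right (hc : IsWeightedContraction G' G φ ω) {W : Type*} (H : SimpleGraph W) :
    IsWeightedContraction (H □ G') (H □ G) (Prod.map id φ) (ω ∘ Prod.snd) := by
  rintro ⟨p₁, p₂⟩ ⟨q₁, q₂⟩ hpq
  rcases boxProd_adj.1 hpq with ⟨h₁, rfl : p₂ = q₂⟩ | ⟨h₂, rfl : p₁ = q₁⟩
  · exact .inr ⟨boxProd_adj.2 (.inl ⟨h₁, rfl⟩), rfl⟩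
  · rcases hc h₂ with ⟨hφ, hω⟩ | ⟨hadj, hω⟩
    · exact .inl ⟨by simp [hφ], hω⟩
    · exact .inr ⟨boxProd_adj.2 (.inr ⟨hadj, rfl⟩), hω⟩

variable [Fintype V'] [DecidableEq V] [DecidableEq V']

theorem reaches_of_pebMove (hc : IsWeightedContraction G' G φ ω) {B B' : V' → ℕ}
    (h : PebMove G' B B') : Reaches G (weightedPush φ ω B) (weightedPush φ ω B') := by
  obtain ⟨p, q, hpq, hB⟩ := pebMove_iff.1 h
  have hpush := congrArg (weightedPush φ ω) hB
  simp only [map_add, weightedPush_single, mul_one] at hpush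
  rcases hc hpq with ⟨hφ, hω⟩ | ⟨hadj, hω⟩
  · refine reaches_of_le (le_of_add_le_add_right (a := Pi.single (φ p) (ω p * 2)) ?_)
    rw [hpush, hφ]
    exact add_le_add_right (Pi.single_mono (f := fun _ => ℕ) (φ q) (by omega)) _
  · rw [hω] at hpush
    have hle : ω p * 2 ≤ weightedPush φ ω B (φ p) := by
      have := congrFun hpush (φ p)
      simp only [Pi.add_apply, Pi.single_eq_same, Pi.single_eq_of_ne hadj.ne] at this
      omega
    obtain ⟨C, hC⟩ := exists_eq_add_single_of_le hle
    have hB' : weightedPush φ ω B' = C + Pi.single (φ q) (ω p) := by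
      refine add_right_cancel (b := Pi.single (φ p) (ω p * 2)) ?_
      rw [hpush, hC, add_right_comm]
    rw [hC, hB', mul_comm]
    exact ⟨_, reflTransGen_pebMove_repeat hadj C (ω p), fun _ => le_rfl⟩

theorem reaches (hc : IsWeightedContraction G' G φ ω) {B T : V' → ℕ} (h : Reaches G' B T) :
    Reaches G (weightedPush φ ω B) (weightedPush φ ω T) := by
  obtain ⟨B₁, hB₁, hTB₁⟩ := h
  refine (?_ : Reaches G _ (weightedPush φ ω B₁)).mono_right (weightedPush_mono φ ω hTB₁)
  clear hTB₁
  induction hB₁ with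
  | refl => exact reaches_of_le le_rfl
  | tail _ hmove ih => exact ih.trans (hc.reaches_of_pebMove hmove)

theorem peb_single_le [Fintype V] (hc : IsWeightedContraction G' G φ ω) {ι : V → V'}
    (hφι : ∀ v, φ (ι v) = v) (hωι : ∀ v, ω (ι v) = 1) (p : V') (t : ℕ) :
    peb G (Pi.single (φ p) (ω p * t)) ≤ peb G' (Pi.single p t) := by
  refine peb_le_iff.2 fun D hD => ?_
  have hreach := hc.reaches (reaches_of_peb_le (D := weightedPush ι 1 D)
    (by rwa [pebTotal_weightedPush_one]))
  rwa [weightedPush_weightedPush_one hφι hωι, weightedPush_single] at hreach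

end IsWeightedContraction

end Contraction

section AddLeaf

variable {V : Type*}

def addLeaf (G : SimpleGraph V) (x : V) : SimpleGraph (Option V) where
  Adj
    | some u, some v => G.Adj u v
    | some u, none | none, some u => u = x
    | none, none => False
  symm := ⟨by
    rintro (_ | u) (_ | v) h
    exacts [h, h, h, G.adj_symm h]⟩
  loopless := ⟨by
    rintro (_ | u) h
    exacts [h, G.loopless.irrefl u h]⟩

variable (G : SimpleGraph V) (x : V)

def addLeafHom : G →g addLeaf G x where
  toFun := some
  map_rel' h := h

@[simp]
theorem coe_addLeafHom : ⇑(addLeafHom G x) = some :=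
  rfl

theorem isWeightedContraction_addLeaf :
    IsWeightedContraction (addLeaf G x) G (fun o => o.elim x id) (fun o => o.elim 2 1) := by
  rintro (_ | u) (_ | v) (h : (addLeaf G x).Adj _ _)
  · exact h.elim
  · exact .inl ⟨Eq.symm h, by simp⟩
  · exact .inl ⟨(h : u = x), by simp⟩
  · exact .inr ⟨h, rfl⟩

variable [Fintype V] [DecidableEq V]

theorem peb_addLeaf_le (t : ℕ) :
    peb (addLeaf G x) (unitDist t none) ≤ peb G (unitDist (2 * t) x) := by
  rw [unitDist_eq_single, unitDist_eq_single, peb_le_iff]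
  intro D hD
  set s := D none
  set D₀ : V → ℕ := fun v => D (some v)
  have hD_eq : D = weightedPush some 1 D₀ + Pi.single none s := by
    ext (_ | v) <;> simp [weightedPush_apply, D₀, s, Finset.sum_filter]
  -- the `s` pebbles on the leaf are traded for `2 * s` pebbles on `x`
  have htotal : pebTotal D ≤ pebTotal (D₀ + Pi.single x (2 * s)) := by
    simp only [pebTotal, Fintype.sum_option, Pi.add_apply, Finset.sum_add_distrib,
      Finset.sum_pi_single', Finset.mem_univ, if_true, D₀, s]
    omega
  obtain ⟨E, hE, htE⟩ := reaches_of_peb_le (G := G) (T := Pi.single x (2 * t))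
    (D := D₀ + Pi.single x (2 * s)) (hD.trans (by exact_mod_cast htotal))
  obtain ⟨F, hF, hEF⟩ := exists_reflTransGen_of_reflTransGen_add_single hE
  obtain ⟨F₀, rfl⟩ := exists_eq_add_single_of_le (D := F) (u := x) (n := 2 * (t - s)) <| by
    have h₁ := htE x
    have h₂ := hEF x
    rw [Pi.single_eq_same] at h₁
    omega
  have hlift := reflTransGen_pebMove_add_right
    (reflTransGen_pebMove_weightedPush_one (addLeafHom G x) hF) (Pi.single none s)
  have hmoves := reflTransGen_pebMove_repeat (G := addLeaf G x) (u := some x) (v := none) rfl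
    (weightedPush some 1 F₀ + Pi.single none s) (t - s)
  rw [coe_addLeafHom, ← hD_eq, map_add, weightedPush_single, Pi.one_apply, one_mul,
    add_right_comm] at hlift
  refine ⟨_, hlift.trans hmoves, fun o => ?_⟩
  rcases eq_or_ne o none with rfl | ho
  · simp only [Pi.add_apply, Pi.single_eq_same]
    omega
  · simp [ho]

end AddLeaf

section BoxProd

variable {V W : Type*} [Fintype V] [DecidableEq V] [Fintype W] [DecidableEq W]
  (G : SimpleGraph V) (H : SimpleGraph W) (x : V) (y : W)

theorem peb_boxProd_le_addLeaf_left (t : ℕ) :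
    peb (G □ H) (unitDist (2 * t) (x, y)) ≤ peb (addLeaf G x □ H) (unitDist t (none, y)) := by
  simpa [unitDist_eq_single] using
    ((isWeightedContraction_addLeaf G x).boxProd_left H).peb_single_le
      (ι := Prod.map some id) (fun _ => rfl) (fun _ => rfl) (none, y) t

theorem peb_boxProd_le_addLeaf_right (t : ℕ) :
    peb (G □ H) (unitDist (2 * t) (x, y)) ≤ peb (G □ addLeaf H y) (unitDist t (x, none)) := by
  simpa [unitDist_eq_single] using
    ((isWeightedContraction_addLeaf H y).boxProd_right G).peb_single_le
      (ι := Prod.map id some) (fun _ => rfl) (fun _ => rfl) (x, none) t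

end BoxProd

theorem peb_boxProd_pow_two_le
    (hgraham : ∀ (V W : Type) [Fintype V] [DecidableEq V] [Fintype W] [DecidableEq W]
      (G : SimpleGraph V) (H : SimpleGraph W) (x : V) (y : W),
      peb (G □ H) (unitDist 1 (x, y)) ≤ peb G (unitDist 1 x) * peb H (unitDist 1 y))
    (a b : ℕ) {V W : Type} [Fintype V] [DecidableEq V] [Fintype W] [DecidableEq W]
    (G : SimpleGraph V) (H : SimpleGraph W) (x : V) (y : W) :
    peb (G □ H) (unitDist (2 ^ (a + b)) (x, y))
      ≤ peb G (unitDist (2 ^ a) x) * peb H (unitDist (2 ^ b) y) := by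
  induction a generalizing V with
  | succ a ih =>
    calc peb (G □ H) (unitDist (2 ^ (a + 1 + b)) (x, y))
        = peb (G □ H) (unitDist (2 * 2 ^ (a + b)) (x, y)) := by rw [add_right_comm, pow_succ']
      _ ≤ peb (addLeaf G x □ H) (unitDist (2 ^ (a + b)) (none, y)) :=
        peb_boxProd_le_addLeaf_left G H x y _
      _ ≤ peb (addLeaf G x) (unitDist (2 ^ a) none) * peb H (unitDist (2 ^ b) y) :=
        ih (addLeaf G x) none
      _ ≤ peb G (unitDist (2 ^ (a + 1)) x) * peb H (unitDist (2 ^ b) y) := by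
        rw [pow_succ']
        gcongr
        exact peb_addLeaf_le G x _
  | zero =>
    induction b generalizing W with
    | zero => simpa using hgraham V W G H x y
    | succ b ih =>
      calc peb (G □ H) (unitDist (2 ^ (0 + (b + 1))) (x, y))
          = peb (G □ H) (unitDist (2 * 2 ^ (0 + b)) (x, y)) := by rw [← add_assoc, pow_succ']
        _ ≤ peb (G □ addLeaf H y) (unitDist (2 ^ (0 + b)) (x, none)) :=
          peb_boxProd_le_addLeaf_right G H x y _
        _ ≤ peb G (unitDist (2 ^ 0) x) * peb (addLeaf H y) (unitDist (2 ^ b) none) :=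
          ih (addLeaf H y) none
        _ ≤ peb G (unitDist (2 ^ 0) x) * peb H (unitDist (2 ^ (b + 1)) y) := by
          rw [pow_succ']
          gcongr
          exact peb_addLeaf_le H y _

open SimpleGraph in
/-- The Graham-type inequality for single target vertices is equivalent to the
family of inequalities for powers of two. -/
theorem one_iff_powers_of_two :
    (∀ (V W : Type) [Fintype V] [DecidableEq V] [Fintype W] [DecidableEq W]
        (G : SimpleGraph V) (H : SimpleGraph W) (x : V) (y : W),
        peb (G □ H) (unitDist 1 (x, y))
          ≤ peb G (unitDist 1 x) * peb H (unitDist 1 y)) ↔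
    (∀ (V W : Type) [Fintype V] [DecidableEq V] [Fintype W] [DecidableEq W]
        (G : SimpleGraph V) (H : SimpleGraph W) (a b : ℕ) (x : V) (y : W),
        peb (G □ H) (unitDist (2 ^ (a + b)) (x, y))
          ≤ peb G (unitDist (2 ^ a) x) * peb H (unitDist (2 ^ b) y)) :=
  ⟨fun h V W _ _ _ _ G H a b x y => peb_boxProd_pow_two_le h a b G H x y,
    fun h V W _ _ _ _ G H x y => by simpa using h V W G H 0 0 x y⟩
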